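/- arXiv:1505.02803 — 2 statements merged into one kernel-verified Lean document; each statement's English description precedes it below -/
import Mathlib

section
/- Let 0 < α < 1. There exist constants c₁, c₂ > 0 (depending only on α) such that for every x ≥ 0 one has c₁/(1+x) ≤ E_{α,1}(-x) ≤ c₂/(1+x), where E_{α,1} is the two-parameter Mittag-Leffler function with parameters a = α, b = 1. -/
/-!
`Ring.multichoose β k` is the coefficient of `zᵏ` in `(1 - z)^(-β)`. The Taylor coefficients
`approx α q n` of `(1 - z)^(α - 1) / ((1 - z)^α + q)` discretise `E_{α,1}`: since
`Ring.multichoose β n ~ n^(β - 1) / Γ(β)`, they tend to `E_{α,1}(-x)` when `q = x / n^α`.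
Multiplying the generating function by `(1 - z)^(-α)`, resp. by `(1 - z)^α`, gives two convolution
identities. The kernel of the second is `1` followed by nonpositive terms, so `1 - approx α q n` and
its differences in `n` satisfy Volterra recursions with nonnegative kernel and forcing; hence
`n ↦ approx α q n` is antitone. With antitonicity the two identities give
`approx α q n * (1 + q * Ring.multichoose (1 + α) n) ≤ 1` and
`Ring.multichoose (1 - α) n ≤ approx α q n * (Ring.multichoose (1 - α) n + q)`, and in the limit
`1 / (1 + Γ(1 - α) x) ≤ E_{α,1}(-x) ≤ 1 / (1 + x / Γ(1 + α))`.
-/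

open MeasureTheory Real Set

/-- The two-parameter Mittag-Leffler function `E_{a,b}(z) = ∑ₖ zᵏ / Γ(a k + b)`. -/
noncomputable def mittagLeffler (a b z : ℝ) : ℝ :=
  ∑' k : ℕ, z ^ k / Real.Gamma (a * k + b)

open Finset Filter Topology

namespace Real

theorem multichoose_succ_mul (β : ℝ) (k : ℕ) :
    ((k : ℝ) + 1) * Ring.multichoose β (k + 1) = (β + k) * Ring.multichoose β k := by
  have hk := Ring.factorial_nsmul_multichoose_eq_ascPochhammer β k
  have hk1 := Ring.factorial_nsmul_multichoose_eq_ascPochhammer β (k + 1)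
  rw [Polynomial.ascPochhammer_smeval_eq_eval, nsmul_eq_mul] at hk hk1
  rw [ascPochhammer_succ_eval, ← hk, Nat.factorial_succ] at hk1
  push_cast at hk1
  exact mul_left_cancel₀ (by positivity : (k.factorial : ℝ) ≠ 0) (by linear_combination hk1)

theorem multichoose_eq_prod (β : ℝ) (k : ℕ) :
    Ring.multichoose β k = ∏ i ∈ range k, (β + i) / (i + 1) := by
  induction k with
  | zero => simp
  | succ k ih =>
    rw [prod_range_succ, ← ih, mul_div_assoc', eq_div_iff (by positivity), mul_comm,
      multichoose_succ_mul, mul_comm]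

theorem multichoose_nonneg {β : ℝ} (hβ : 0 ≤ β) (k : ℕ) : 0 ≤ Ring.multichoose β k := by
  rw [multichoose_eq_prod]
  exact prod_nonneg fun i _ => by positivity

theorem multichoose_pos {β : ℝ} (hβ : 0 < β) (k : ℕ) : 0 < Ring.multichoose β k := by
  rw [multichoose_eq_prod]
  exact prod_pos fun i _ => by positivity

theorem multichoose_le_multichoose {β γ : ℝ} (hβ : 0 ≤ β) (hβγ : β ≤ γ) (k : ℕ) :
    Ring.multichoose β k ≤ Ring.multichoose γ k := by
  simp only [multichoose_eq_prod]
  exact prod_le_prod (fun i _ => by positivity) fun i _ => by gcongr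

theorem multichoose_neg_succ_nonpos {α : ℝ} (hα0 : 0 ≤ α) (hα1 : α ≤ 1) (k : ℕ) :
    Ring.multichoose (-α) (k + 1) ≤ 0 := by
  rw [multichoose_eq_prod, prod_range_succ']
  refine mul_nonpos_of_nonneg_of_nonpos (prod_nonneg fun i _ => ?_) (by simpa using hα0)
  have : (1 : ℝ) ≤ i + 1 := by simp
  exact div_nonneg (by push_cast; linarith) (by positivity)

theorem multichoose_add (s t : ℝ) (n : ℕ) :
    Ring.multichoose (s + t) n =
      ∑ ij ∈ antidiagonal n, Ring.multichoose s ij.1 * Ring.multichoose t ij.2 := by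
  have sign (r : ℝ) (k : ℕ) : Ring.choose (-r) k = (-1) ^ k * Ring.multichoose r k := by
    rw [Ring.choose_neg', Units.smul_def, zsmul_eq_mul, Int.cast_negOnePow_natCast]
  have h := Ring.add_choose_eq (r := -s) (s := -t) n (Commute.all _ _)
  simp only [← neg_add, sign] at h
  have sign_mul : ∀ ij ∈ antidiagonal n,
      (-1 : ℝ) ^ ij.1 * Ring.multichoose s ij.1 * ((-1) ^ ij.2 * Ring.multichoose t ij.2) =
        (-1) ^ n * (Ring.multichoose s ij.1 * Ring.multichoose t ij.2) := by
    intro ij hij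
    rw [← mem_antidiagonal.mp hij, pow_add]
    ring
  rw [sum_congr rfl sign_mul, ← mul_sum] at h
  exact mul_left_cancel₀ (pow_ne_zero _ (by norm_num)) h

theorem sum_antidiagonal_multichoose (s : ℝ) (n : ℕ) :
    ∑ ij ∈ antidiagonal n, Ring.multichoose s ij.1 = Ring.multichoose (s + 1) n := by
  simp [multichoose_add]

theorem multichoose_natCast_add_one (m k : ℕ) :
    Ring.multichoose ((m : ℝ) + 1) k = (m + k).choose k := by
  rw [Ring.multichoose_eq, ← Ring.choose_natCast]
  push_cast
  ring_nf

theorem summable_pow_mul_multichoose {α r : ℝ} (hα0 : 0 ≤ α) (hα1 : α ≤ 1) (hr0 : 0 ≤ r)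
    (hr1 : r < 1) (k : ℕ) : Summable fun m : ℕ => r ^ m * Ring.multichoose (α * m + 1) k := by
  refine (summable_choose_mul_geometric_of_norm_lt_one k
    (by rwa [norm_of_nonneg hr0] : ‖r‖ < 1)).of_nonneg_of_le
    (fun m => mul_nonneg (by positivity) (multichoose_nonneg (by positivity) k)) fun m => ?_
  rw [mul_comm, ← multichoose_natCast_add_one]
  gcongr
  exact multichoose_le_multichoose (by positivity)
      (by nlinarith [(Nat.cast_nonneg m : (0 : ℝ) ≤ m)]) k

theorem multichoose_mul_GammaSeq {β : ℝ} (hβ : 0 < β) (n : ℕ) :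
    Ring.multichoose β n * GammaSeq β n = n ^ β / (β + n) := by
  have hfact : ∏ i ∈ range n, ((i : ℝ) + 1) = n.factorial := by
    exact_mod_cast prod_range_add_one_eq_factorial n
  have hprod : ∏ i ∈ range n, (β + i) ≠ 0 := prod_ne_zero_iff.mpr fun i _ => by positivity
  rw [multichoose_eq_prod, prod_div_distrib, hfact, GammaSeq, prod_range_succ]
  field_simp

theorem tendsto_multichoose_div_rpow {β : ℝ} (hβ : 0 < β) :
    Tendsto (fun n : ℕ => Ring.multichoose β n / (n : ℝ) ^ (β - 1)) atTop
      (𝓝 (Gamma β)⁻¹) := by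
  have h := ((tendsto_natCast_div_add_atTop β).mul
    ((GammaSeq_tendsto_Gamma β).inv₀ (Gamma_pos_of_pos hβ).ne'))
  rw [one_mul] at h
  refine h.congr' ?_
  filter_upwards [eventually_gt_atTop 0] with n hn
  have hn' : (0 : ℝ) < n := by exact_mod_cast hn
  have hG : GammaSeq β n ≠ 0 := by
    rw [GammaSeq]
    positivity
  have key := multichoose_mul_GammaSeq hβ n
  rw [eq_div_iff (by positivity)] at key
  rw [rpow_sub_one hn'.ne']
  field_simp
  linear_combination -key

theorem add_mul_rpow_sub_one_le {β x : ℝ} (hβ : 1 ≤ β) (hx : 0 < x) :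
    (β + x) * x ^ (β - 1) ≤ (x + 1) ^ β := by
  have bernoulli := one_add_mul_self_le_rpow_one_add (by linarith [inv_pos.mpr hx] : -1 ≤ x⁻¹) hβ
  calc (β + x) * x ^ (β - 1) = x ^ β * (1 + β * x⁻¹) := by
        rw [rpow_sub_one hx.ne']
        field_simp
        ring
    _ ≤ x ^ β * (1 + x⁻¹) ^ β := by gcongr
    _ = (x + 1) ^ β := by
        rw [← mul_rpow hx.le (by positivity)]
        congr 1
        field_simp

theorem multichoose_succ_div_rpow_le {β : ℝ} (hβ : 1 ≤ β) {k : ℕ} (hk : 0 < k) :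
    Ring.multichoose β (k + 1) / ((k + 1 : ℕ) : ℝ) ^ (β - 1) ≤
      Ring.multichoose β k / (k : ℝ) ^ (β - 1) := by
  have hk' : (0 : ℝ) < k := by exact_mod_cast hk
  have hsucc : Ring.multichoose β (k + 1) = Ring.multichoose β k * (β + k) / (k + 1) := by
    rw [eq_div_iff (by positivity), mul_comm, multichoose_succ_mul, mul_comm]
  have hM := multichoose_nonneg (by linarith : 0 ≤ β) k
  rw [div_le_div_iff₀ (by positivity) (by positivity)]
  calc Ring.multichoose β (k + 1) * (k : ℝ) ^ (β - 1)
      = Ring.multichoose β k * ((β + k) * (k : ℝ) ^ (β - 1)) / (k + 1) := by rw [hsucc]; ring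
    _ ≤ Ring.multichoose β k * ((k : ℝ) + 1) ^ β / (k + 1) := by
        gcongr
        exact add_mul_rpow_sub_one_le hβ hk'
    _ = Ring.multichoose β k * ((k + 1 : ℕ) : ℝ) ^ (β - 1) := by
        push_cast
        rw [rpow_sub_one (by positivity)]
        field_simp

theorem multichoose_div_rpow_le_of_le {β : ℝ} (hβ : 1 ≤ β) {N k : ℕ} (hN : 0 < N)
    (hNk : N ≤ k) :
    Ring.multichoose β k / (k : ℝ) ^ (β - 1) ≤ Ring.multichoose β N / (N : ℝ) ^ (β - 1) := by
  induction k, hNk using Nat.le_induction with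
  | base => rfl
  | succ k hNk ih => exact (multichoose_succ_div_rpow_le hβ (hN.trans_le hNk)).trans ih

end Real

section Volterra

variable {c : ℝ} {f w u : ℕ → ℝ}

theorem nonneg_of_mul_eq_add_sum (hc : 0 < c) (hf : 0 ≤ f) (hw : ∀ k ≠ 0, 0 ≤ w k)
    (h : ∀ n, c * u n = f n + ∑ i ∈ range n, w (n - i) * u i) : 0 ≤ u := by
  intro n
  induction n using Nat.strong_induction_on with
  | _ n ih =>
    refine (mul_nonneg_iff_of_pos_left hc).mp ?_
    rw [h n]
    refine add_nonneg (hf n) (sum_nonneg fun i hi => ?_)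
    have hi : i < n := mem_range.mp hi
    exact mul_nonneg (hw _ (by omega)) (ih i hi)

theorem monotone_of_mul_eq_add_sum (hc : 0 < c) (hf : Monotone f) (hf0 : 0 ≤ f 0)
    (hw : ∀ k ≠ 0, 0 ≤ w k) (h : ∀ n, c * u n = f n + ∑ i ∈ range n, w (n - i) * u i) :
    Monotone u := by
  have hu0 : 0 ≤ u 0 := (mul_nonneg_iff_of_pos_left hc).mp (by simpa [h 0])
  have hdiff := nonneg_of_mul_eq_add_sum (u := fun n => u (n + 1) - u n)
    (f := fun n => f (n + 1) - f n + w (n + 1) * u 0) hc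
    (fun n => add_nonneg (sub_nonneg.mpr (hf n.le_succ)) (mul_nonneg (hw _ n.succ_ne_zero) hu0))
    hw fun n => by
      simp only [mul_sub, h, sum_range_succ', Nat.add_sub_add_right, Nat.sub_zero,
        sum_sub_distrib]
      ring
  exact monotone_nat_of_le_succ fun n => sub_nonneg.mp (hdiff n)

end Volterra

namespace MittagLeffler

/-- The `n`-th coefficient of
`(1 - z)^(α - 1) / ((1 - z)^α + q) = ∑ₘ (-q)ᵐ (1 - z)^(-(α m + 1))`. -/
noncomputable def approx (α q : ℝ) (n : ℕ) : ℝ :=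
  ∑' m : ℕ, (-q) ^ m * Ring.multichoose (α * m + 1) n

section Scheme

variable {α q : ℝ} (hα0 : 0 ≤ α) (hα1 : α ≤ 1) (hq0 : 0 ≤ q) (hq1 : q < 1)
include hα0 hα1 hq0 hq1

theorem summable_approx (n : ℕ) :
    Summable fun m : ℕ => (-q) ^ m * Ring.multichoose (α * m + 1) n :=
  (summable_pow_mul_multichoose hα0 hα1 hq0 hq1 n).of_norm_bounded fun m => by
    rw [norm_mul, norm_pow, norm_neg, norm_of_nonneg hq0,
      norm_of_nonneg (multichoose_nonneg (by positivity) n)]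

theorem hasSum_multichoose_add (s : ℝ) (n : ℕ) :
    HasSum (fun m : ℕ => (-q) ^ m * Ring.multichoose (s + (α * m + 1)) n)
      (∑ ij ∈ antidiagonal n, Ring.multichoose s ij.1 * approx α q ij.2) := by
  refine (hasSum_sum fun (ij : ℕ × ℕ) _ => (summable_approx hα0 hα1 hq0 hq1 ij.2).hasSum.mul_left
    (Ring.multichoose s ij.1)).congr_fun fun m => ?_
  rw [multichoose_add, mul_sum]
  exact sum_congr rfl fun ij _ => by ring

theorem approx_add_mul_sum (n : ℕ) :
    approx α q n + q * ∑ ij ∈ antidiagonal n, Ring.multichoose α ij.1 * approx α q ij.2 = 1 := by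
  have hshift : HasSum (fun m : ℕ => (-q) ^ (m + 1) * Ring.multichoose (α * (m + 1 : ℕ) + 1) n)
      (-q * ∑ ij ∈ antidiagonal n, Ring.multichoose α ij.1 * approx α q ij.2) := by
    refine ((hasSum_multichoose_add hα0 hα1 hq0 hq1 α n).mul_left (-q)).congr_fun fun m => ?_
    push_cast
    ring_nf
  have := (summable_approx hα0 hα1 hq0 hq1 n).hasSum.unique
    (HasSum.zero_add (f := fun m : ℕ => (-q) ^ m * Ring.multichoose (α * m + 1) n) hshift)
  simp only [pow_zero, CharP.cast_eq_zero, mul_zero, zero_add, Ring.multichoose_one,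
    one_mul] at this
  rw [approx, this]
  ring

theorem sum_add_mul_approx (n : ℕ) :
    ∑ ij ∈ antidiagonal n, Ring.multichoose (-α) ij.1 * approx α q ij.2 + q * approx α q n =
      Ring.multichoose (1 - α) n := by
  have hshift : HasSum
      (fun m : ℕ => (-q) ^ (m + 1) * Ring.multichoose (-α + (α * (m + 1 : ℕ) + 1)) n)
      (-q * approx α q n) := by
    refine ((summable_approx hα0 hα1 hq0 hq1 n).hasSum.mul_left (-q)).congr_fun fun m => ?_
    push_cast
    ring_nf
  have := (hasSum_multichoose_add hα0 hα1 hq0 hq1 (-α) n).unique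
    (HasSum.zero_add (f := fun m : ℕ => (-q) ^ m * Ring.multichoose (-α + (α * m + 1)) n) hshift)
  simp only [pow_zero, CharP.cast_eq_zero, mul_zero, zero_add, one_mul] at this
  rw [this, neg_add_eq_sub]
  ring

theorem approx_antitone : Antitone (approx α q) := by
  have hrec (n : ℕ) : (1 + q) * (1 - approx α q n) =
      q + ∑ i ∈ range n, -Ring.multichoose (-α) (n - i) * (1 - approx α q i) := by
    have hconv : ∑ ij ∈ antidiagonal n, Ring.multichoose (-α) ij.1 * (1 - approx α q ij.2) =
        ∑ i ∈ range n, Ring.multichoose (-α) (n - i) * (1 - approx α q i) + (1 - approx α q n) := by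
      rw [← Nat.sum_antidiagonal_swap]
      simp only [Prod.fst_swap, Prod.snd_swap]
      rw [Nat.sum_antidiagonal_eq_sum_range_succ
        (fun i j => Ring.multichoose (-α) j * (1 - approx α q i)), sum_range_succ]
      simp
    have hone : ∑ ij ∈ antidiagonal n, Ring.multichoose (-α) ij.1 * (1 - approx α q ij.2) =
        q * approx α q n := by
      have h := sum_antidiagonal_multichoose (-α) n
      rw [neg_add_eq_sub] at h
      simp only [mul_sub, mul_one, sum_sub_distrib]
      linarith [sum_add_mul_approx hα0 hα1 hq0 hq1 n]
    simp only [neg_mul, sum_neg_distrib]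
    linear_combination hone - hconv
  have hmono := monotone_of_mul_eq_add_sum (f := fun _ => q)
    (w := fun k => -Ring.multichoose (-α) k) (u := fun n => 1 - approx α q n)
    (by linarith : (0 : ℝ) < 1 + q) monotone_const hq0
    (fun k hk => ?_) hrec
  · exact fun m n hmn => by linarith [hmono hmn]
  · obtain ⟨j, rfl⟩ := Nat.exists_eq_succ_of_ne_zero hk
    exact neg_nonneg.mpr (multichoose_neg_succ_nonpos hα0 hα1 j)

theorem approx_mul_le (n : ℕ) : approx α q n * (1 + q * Ring.multichoose (1 + α) n) ≤ 1 := by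
  have hsum : approx α q n * Ring.multichoose (1 + α) n ≤
      ∑ ij ∈ antidiagonal n, Ring.multichoose α ij.1 * approx α q ij.2 := by
    rw [add_comm, ← sum_antidiagonal_multichoose, mul_sum]
    refine sum_le_sum fun ij hij => ?_
    rw [mul_comm]
    exact mul_le_mul_of_nonneg_left
      (approx_antitone hα0 hα1 hq0 hq1 (HasAntidiagonal.antidiagonal.snd_le hij))
      (multichoose_nonneg hα0 _)
  nlinarith [approx_add_mul_sum hα0 hα1 hq0 hq1 n, mul_le_mul_of_nonneg_left hsum hq0]

theorem le_approx_mul (n : ℕ) :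
    Ring.multichoose (1 - α) n ≤ approx α q n * (Ring.multichoose (1 - α) n + q) := by
  have hsum : ∑ ij ∈ antidiagonal n, Ring.multichoose (-α) ij.1 * approx α q ij.2 ≤
      approx α q n * Ring.multichoose (1 - α) n := by
    rw [sub_eq_neg_add, ← sum_antidiagonal_multichoose, mul_sum]
    refine sum_le_sum fun ij hij => ?_
    rw [mul_comm (approx α q n)]
    rcases ij with ⟨_ | i, j⟩
    · obtain rfl : j = n := by simpa using hij
      rfl
    · exact mul_le_mul_of_nonpos_left
        (approx_antitone hα0 hα1 hq0 hq1 (HasAntidiagonal.antidiagonal.snd_le hij))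
        (multichoose_neg_succ_nonpos hα0 hα1 i)
  linarith [sum_add_mul_approx hα0 hα1 hq0 hq1 n]

end Scheme

theorem eventually_div_rpow_lt_one {α : ℝ} (hα : 0 < α) (x : ℝ) :
    ∀ᶠ n : ℕ in atTop, x / (n : ℝ) ^ α < 1 :=
  (tendsto_const_nhds.div_atTop ((tendsto_rpow_atTop hα).comp
    tendsto_natCast_atTop_atTop)).eventually_lt_const one_pos

theorem div_rpow_pow_mul (z c α : ℝ) (n m : ℕ) :
    (z / (n : ℝ) ^ α) ^ m * c = z ^ m * (c / (n : ℝ) ^ (α * m + 1 - 1)) := by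
  rw [add_sub_cancel_right, rpow_mul (Nat.cast_nonneg n), rpow_natCast, div_pow]
  ring

theorem tendsto_approx {α y : ℝ} (hα0 : 0 < α) (hα1 : α ≤ 1) (hy : 0 ≤ y) :
    Tendsto (fun n : ℕ => approx α (y / (n : ℝ) ^ α) n) atTop (𝓝 (mittagLeffler α 1 (-y))) := by
  obtain ⟨N, hN, hyN⟩ := ((eventually_gt_atTop 0).and (eventually_div_rpow_lt_one hα0 y)).exists
  refine tendsto_tsum_of_dominated_convergence
    (summable_pow_mul_multichoose hα0.le hα1 (by positivity) hyN N) (fun m => ?_) ?_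
  · simp only [← neg_div, div_rpow_pow_mul, div_eq_mul_inv (_ ^ m)]
    exact (tendsto_multichoose_div_rpow (by positivity)).const_mul _
  · filter_upwards [eventually_ge_atTop N] with n hn m
    have hβ : 1 ≤ α * m + 1 := by nlinarith [(Nat.cast_nonneg m : (0 : ℝ) ≤ m)]
    rw [← neg_div, div_rpow_pow_mul, div_rpow_pow_mul, norm_mul, norm_pow, norm_neg,
      norm_of_nonneg hy, norm_of_nonneg (div_nonneg (multichoose_nonneg (by linarith) n)
        (rpow_nonneg (Nat.cast_nonneg n) _))]
    exact mul_le_mul_of_nonneg_left (multichoose_div_rpow_le_of_le hβ hN hn) (by positivity)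

end MittagLeffler

section SimonBounds

open MittagLeffler

theorem mittagLeffler_neg_le {α x : ℝ} (hα0 : 0 < α) (hα1 : α ≤ 1) (hx : 0 ≤ x) :
    mittagLeffler α 1 (-x) ≤ 1 / (1 + x / Gamma (1 + α)) := by
  have hΓ := Gamma_pos_of_pos (by linarith : 0 < 1 + α)
  rw [le_div_iff₀ (by positivity)]
  have hq : Tendsto (fun n : ℕ => x / (n : ℝ) ^ α * Ring.multichoose (1 + α) n) atTop
      (𝓝 (x / Gamma (1 + α))) := by
    have h := (tendsto_multichoose_div_rpow (β := 1 + α) (by positivity)).const_mul x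
    rw [add_sub_cancel_left, ← div_eq_mul_inv] at h
    exact h.congr fun n => by ring
  refine le_of_tendsto ((tendsto_approx hα0 hα1 hx).mul (hq.const_add 1)) ?_
  filter_upwards [eventually_div_rpow_lt_one hα0 x] with n hn
  exact approx_mul_le hα0.le hα1 (by positivity) hn n

theorem one_div_le_mittagLeffler_neg {α x : ℝ} (hα0 : 0 < α) (hα1 : α < 1) (hx : 0 ≤ x) :
    1 / (1 + Gamma (1 - α) * x) ≤ mittagLeffler α 1 (-x) := by
  have hΓ := Gamma_pos_of_pos (by linarith : 0 < 1 - α)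
  rw [div_le_iff₀ (by positivity)]
  have hq : Tendsto (fun n : ℕ => x / (n : ℝ) ^ α / Ring.multichoose (1 - α) n) atTop
      (𝓝 (Gamma (1 - α) * x)) := by
    have h := (tendsto_multichoose_div_rpow (β := 1 - α) (by linarith))
    rw [sub_sub_cancel_left] at h
    convert tendsto_const_nhds (x := x) |>.div h (inv_ne_zero (Gamma_pos_of_pos
      (by linarith)).ne') using 1
    · funext n
      rw [Pi.div_apply, rpow_neg (Nat.cast_nonneg _), div_inv_eq_mul, div_div, mul_comm]
    · rw [div_inv_eq_mul, mul_comm]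
  refine ge_of_tendsto ((tendsto_approx hα0 hα1.le hx).mul (hq.const_add 1)) ?_
  filter_upwards [eventually_div_rpow_lt_one hα0 x] with n hn
  have hmc := multichoose_pos (by linarith : 0 < 1 - α) n
  rw [one_add_div hmc.ne', mul_div_assoc', le_div_iff₀ hmc, one_mul]
  exact le_approx_mul hα0.le hα1.le (by positivity) hn n

end SimonBounds

theorem mittagLeffler_alpha_one_asymp (α : ℝ) (hα : 0 < α) (hα1 : α < 1) :
    ∃ c₁ > (0:ℝ), ∃ c₂ > (0:ℝ), ∀ x : ℝ, 0 ≤ x →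
      c₁ / (1 + x) ≤ mittagLeffler α 1 (-x) ∧
      mittagLeffler α 1 (-x) ≤ c₂ / (1 + x) := by
  have hΓ₁ : 0 < Gamma (1 - α) := Gamma_pos_of_pos (by linarith)
  have hΓ₂ : 0 < Gamma (1 + α) := Gamma_pos_of_pos (by linarith)
  set c₁ := min 1 (Gamma (1 - α))⁻¹
  set c₂ := max 1 (Gamma (1 + α))
  have hc₁ : c₁ * Gamma (1 - α) ≤ 1 :=
    (mul_le_mul_of_nonneg_right (min_le_right _ _) hΓ₁.le).trans (inv_mul_cancel₀ hΓ₁.ne').le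
  have hc₂ : 1 ≤ c₂ / Gamma (1 + α) := (one_le_div hΓ₂).mpr (le_max_right _ _)
  refine ⟨c₁, by positivity, c₂, by positivity, fun x hx => ⟨?_, ?_⟩⟩
  · refine le_trans ?_ (one_div_le_mittagLeffler_neg hα hα1 hx)
    rw [div_le_div_iff₀ (by positivity) (by positivity)]
    nlinarith [min_le_left 1 (Gamma (1 - α))⁻¹]
  · refine (mittagLeffler_neg_le hα hα1.le hx).trans ?_
    rw [div_le_div_iff₀ (by positivity) (by positivity),
      show c₂ * (1 + x / Gamma (1 + α)) = c₂ + c₂ / Gamma (1 + α) * x by ring]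
    nlinarith [le_max_left 1 (Gamma (1 + α)), mul_le_mul_of_nonneg_right hc₂ hx]
end

section
/- Let 0 < α < 1 and λ ≥ 0. For every t > 0, the function G(t) = (1/Γ(α)) ∫_0^t (t-s)^{α-1} E_{α,1}(-λ s^α) ds is differentiable at t, and its derivative equals t^{α-1} E_{α,α}(-λ t^α). (This is the Fourier-space form of the identity Y = ∂_t^{1-α} Z between the two fundamental solutions, where ∂_t^{1-α} f = d/dt (g_α ∗ f) is the Riemann–Liouville derivative of order 1-α.) -/
open MeasureTheory Real Set

/-!
Expand `E_{α,1}(-λ s^α)` into its power series and integrate term by term: by the Beta integral,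
`(g_α ∗ s^{αk})(τ) = Γ(αk+1) / Γ(αk+α+1) · τ^{αk+α}`, so
`G(τ) = ∑ₖ (-λ)ᵏ τ^{αk+α} / Γ(αk+α+1)`. Differentiating term by term with `Γ(p+1) = p Γ(p)`
gives `∑ₖ (-λ)ᵏ τ^{αk+α-1} / Γ(αk+α) = τ^{α-1} E_{α,α}(-λ τ^α)`. Both interchanges are justified
because `Γ(a k + b)` outgrows every geometric sequence, which makes all the series involved
absolutely convergent, locally uniformly in `τ > 0`.
-/

open Filter Nat

lemma pow_mul_exp_neg_le_factorial {R : ℝ} (hR : 0 ≤ R) (n : ℕ) : R ^ n * exp (-R) ≤ n ! := by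
  rw [exp_neg, ← div_eq_mul_inv, div_le_iff₀ (exp_pos R), mul_comm, ← div_le_iff₀ (by positivity)]
  exact pow_div_factorial_le_exp R hR n

lemma rpow_sub_two_mul_exp_neg_le_Gamma {R x : ℝ} (hR : 1 ≤ R) (hx : 2 ≤ x) :
    R ^ (x - 2) * exp (-R) ≤ Gamma x := by
  set n := ⌊x⌋₊ - 1
  have hfloor : 2 ≤ ⌊x⌋₊ := Nat.le_floor (by exact_mod_cast hx)
  have hn : (n : ℝ) + 1 = ⌊x⌋₊ := by norm_cast; omega
  have hn_le : (n : ℝ) + 1 ≤ x := hn ▸ Nat.floor_le (by linarith)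
  have hn_ge : x - 2 ≤ n := by linarith [Nat.lt_floor_add_one x]
  calc R ^ (x - 2) * exp (-R) ≤ R ^ n * exp (-R) := by
        gcongr
        rw [← rpow_natCast]
        exact rpow_le_rpow_of_exponent_le hR hn_ge
    _ ≤ n ! := pow_mul_exp_neg_le_factorial (by linarith) n
    _ = Gamma (n + 1) := (Gamma_nat_eq_factorial n).symm
    _ ≤ Gamma x := Gamma_strictMonoOn_Ici.monotoneOn
        (show (2 : ℝ) ≤ n + 1 by rw [hn]; exact_mod_cast hfloor)
        hx hn_le

lemma rpow_mul_natCast_add {x : ℝ} (hx : 0 < x) (a b : ℝ) (k : ℕ) :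
    x ^ (a * k + b) = (x ^ a) ^ k * x ^ b := by
  rw [rpow_add hx, rpow_mul_natCast hx.le]

theorem summable_pow_div_Gamma (a b q : ℝ) (ha : 0 < a) :
    Summable fun k : ℕ => q ^ k / Gamma (a * k + b) := by
  -- `Γ(a k + b) ≥ R^(a k + b - 2) e^(-R)` with `R^a = 2|q| + 1` beats the geometric growth of `q^k`
  set R := (2 * |q| + 1) ^ (1 / a)
  have hR : 1 ≤ R := one_le_rpow (by linarith [abs_nonneg q]) (by positivity)
  have hRa : R ^ a = 2 * |q| + 1 := by
    rw [← rpow_mul (by positivity), one_div_mul_cancel ha.ne', rpow_one]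
  have hgeom : Summable fun k : ℕ => (|q| / (2 * |q| + 1)) ^ k * (exp R * R ^ (2 - b)) :=
    (summable_geometric_of_lt_one (by positivity)
      ((div_lt_one (by positivity)).mpr (by linarith [abs_nonneg q]))).mul_right _
  refine hgeom.of_norm_bounded_eventually_nat ?_
  filter_upwards [eventually_ge_atTop ⌈(2 - b) / a⌉₊] with k hk
  have hk2 : 2 ≤ a * k + b := by
    have := (div_le_iff₀ ha).mp (Nat.ceil_le.mp hk)
    linarith
  have hΓ : 0 < Gamma (a * k + b) := Gamma_pos_of_pos (by linarith)
  rw [norm_div, norm_pow, norm_of_nonneg hΓ.le, div_le_iff₀ hΓ]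
  calc |q| ^ k = (|q| / (2 * |q| + 1)) ^ k * (exp R * R ^ (2 - b)) *
        (R ^ (a * k + b - 2) * exp (-R)) := by
        have hR2 : R ^ (2 - b) * R ^ (b - 2) = 1 := by rw [← rpow_add (by positivity)]; simp
        rw [add_sub_assoc, rpow_mul_natCast_add (by positivity), hRa, exp_neg, div_pow]
        field_simp
        rw [mul_assoc, hR2, mul_one]
    _ ≤ _ := by gcongr; exact rpow_sub_two_mul_exp_neg_le_Gamma hR hk2

theorem integral_sub_rpow_mul_rpow {α β τ : ℝ} (hα : 0 < α) (hβ : -1 < β) (hτ : 0 < τ) :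
    ∫ s in (0 : ℝ)..τ, (τ - s) ^ (α - 1) * s ^ β =
      Gamma α * Gamma (β + 1) / Gamma (α + β + 1) * τ ^ (α + β) := by
  have hscaled := Complex.betaIntegral_scaled (β + 1 : ℝ) α hτ
  have hbeta := Complex.Gamma_mul_Gamma_eq_betaIntegral (s := (β + 1 : ℝ)) (t := α)
    (by simp; linarith) (by simpa using hα)
  have hΓ : Gamma (α + β + 1) ≠ 0 := (Gamma_pos_of_pos (by linarith)).ne'
  have hint : ∫ x in (0 : ℝ)..τ, (x : ℂ) ^ ((β + 1 : ℝ) - 1 : ℂ) * ((τ : ℂ) - x) ^ ((α : ℂ) - 1) =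
      ((∫ s in (0 : ℝ)..τ, (τ - s) ^ (α - 1) * s ^ β : ℝ) : ℂ) := by
    rw [← intervalIntegral.integral_ofReal]
    refine intervalIntegral.integral_congr fun x hx => ?_
    rw [uIcc_of_le hτ.le] at hx
    have hτx : 0 ≤ τ - x := by linarith [hx.2]
    simp only [Complex.ofReal_mul, Complex.ofReal_cpow hx.1, Complex.ofReal_cpow hτx]
    push_cast
    ring_nf
  have hexp : ((β + 1 : ℝ) : ℂ) + α = (α + β + 1 : ℝ) := by push_cast; ring
  rw [hint, hexp, show ((α + β + 1 : ℝ) : ℂ) - 1 = (α + β : ℝ) by push_cast; ring,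
    ← Complex.ofReal_cpow hτ.le] at hscaled
  rw [hexp] at hbeta
  simp only [Complex.Gamma_ofReal] at hbeta
  have hB : Complex.betaIntegral (β + 1 : ℝ) α =
      (Gamma α * Gamma (β + 1) / Gamma (α + β + 1) : ℝ) := by
    rw [Complex.ofReal_div, eq_div_iff (by exact_mod_cast hΓ), Complex.ofReal_mul]
    linear_combination -hbeta
  apply Complex.ofReal_injective
  rw [hscaled, hB, ← Complex.ofReal_mul, mul_comm]

theorem hasSum_integral_mul_of_norm_le {f : ℝ → ℝ} {g : ℕ → ℝ → ℝ} {M : ℕ → ℝ} {a b : ℝ}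
    (hf : IntervalIntegrable f volume a b) (hg : ∀ k, ContinuousOn (g k) (uIcc a b))
    (hgM : ∀ k, ∀ s ∈ uIcc a b, ‖g k s‖ ≤ M k) (hM : Summable M) :
    HasSum (fun k => ∫ s in a..b, f s * g k s) (∫ s in a..b, f s * ∑' k, g k s) := by
  refine intervalIntegral.hasSum_integral_of_dominated_convergence (fun k s => ‖f s‖ * M k)
    (fun k => hf.def'.aestronglyMeasurable.mul
      (((hg k).mono uIoc_subset_uIcc).aestronglyMeasurable measurableSet_uIoc))
    (fun k => ae_of_all _ fun s hs => ?_) (ae_of_all _ fun s _ => hM.mul_left _) ?_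
    (ae_of_all _ fun s hs => ?_)
  · rw [norm_mul]
    gcongr
    exact hgM k s (uIoc_subset_uIcc hs)
  · simp_rw [tsum_mul_left]
    exact hf.norm.mul_const _
  · exact ((hM.of_norm_bounded fun k => hgM k s (uIoc_subset_uIcc hs)).hasSum).mul_left _

lemma intervalIntegrable_sub_rpow {τ r : ℝ} (hr : -1 < r) :
    IntervalIntegrable (fun s => (τ - s) ^ r) volume 0 τ := by
  simpa using (intervalIntegral.intervalIntegrable_rpow' (a := τ) (b := 0) hr).comp_sub_left τ

theorem integral_sub_rpow_mul_mittagLeffler (c : ℝ) {α τ : ℝ} (hα : 0 < α) (hτ : 0 < τ) :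
    ∫ s in (0 : ℝ)..τ, (τ - s) ^ (α - 1) * mittagLeffler α 1 (c * s ^ α) =
      Gamma α * ∑' k : ℕ, c ^ k * (τ ^ (α * k + α) / Gamma (α * k + α + 1)) := by
  have hsum := hasSum_integral_mul_of_norm_le (a := 0) (b := τ)
    (g := fun k s => (c * s ^ α) ^ k / Gamma (α * k + 1))
    (M := fun k => (|c| * τ ^ α) ^ k / Gamma (α * k + 1))
    (intervalIntegrable_sub_rpow (r := α - 1) (by linarith))
    (fun k => (((continuous_rpow_const hα.le).const_mul c).pow k).div_const _ |>.continuousOn)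
    (fun k s hs => ?_) (summable_pow_div_Gamma _ _ _ hα)
  · unfold mittagLeffler
    rw [← hsum.tsum_eq, ← tsum_mul_left]
    refine tsum_congr fun k => ?_
    have hterm : EqOn (fun s => (τ - s) ^ (α - 1) * ((c * s ^ α) ^ k / Gamma (α * k + 1)))
        (fun s => c ^ k / Gamma (α * k + 1) * ((τ - s) ^ (α - 1) * s ^ (α * k))) (uIcc 0 τ) := by
      intro s hs
      rw [uIcc_of_le hτ.le] at hs
      simp only [mul_pow, rpow_mul_natCast hs.1]
      ring
    have hΓ : Gamma (α * k + 1) ≠ 0 := (Gamma_pos_of_pos (by positivity)).ne'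
    rw [intervalIntegral.integral_congr hterm, intervalIntegral.integral_const_mul,
      integral_sub_rpow_mul_rpow hα
        (by linarith [show 0 ≤ α * (k : ℝ) by positivity]) hτ, add_comm α]
    field_simp
  · obtain ⟨hs0, hsτ⟩ : 0 ≤ s ∧ s ≤ τ := by rwa [uIcc_of_le hτ.le] at hs
    have hΓ : 0 < Gamma (α * k + 1) := Gamma_pos_of_pos (by positivity)
    rw [norm_div, norm_pow, norm_mul, norm_of_nonneg hΓ.le, norm_of_nonneg (rpow_nonneg hs0 _),
      Real.norm_eq_abs]
    gcongr

lemma hasDerivAt_rpow_div_Gamma_add_one {p y : ℝ} (hp : 0 < p) (hy : y ≠ 0) :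
    HasDerivAt (fun τ => τ ^ p / Gamma (p + 1)) (y ^ (p - 1) / Gamma p) y := by
  refine ((hasDerivAt_rpow_const (Or.inl hy)).div_const _).congr_deriv ?_
  rw [Gamma_add_one hp.ne']
  field_simp [(Gamma_pos_of_pos hp).ne']

theorem hasDerivAt_tsum_rpow_div_Gamma (c : ℝ) {α t : ℝ} (hα : 0 < α) (ht : 0 < t) :
    HasDerivAt (fun τ => ∑' k : ℕ, c ^ k * (τ ^ (α * k + α) / Gamma (α * k + α + 1)))
      (t ^ (α - 1) * mittagLeffler α α (c * t ^ α)) t := by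
  have hp : ∀ k : ℕ, 0 < α * k + α := fun k => by positivity
  have hderiv : ∀ (k : ℕ), ∀ y ∈ Ioo (t / 2) (2 * t),
      HasDerivAt (fun τ => c ^ k * (τ ^ (α * k + α) / Gamma (α * k + α + 1)))
        (c ^ k * (y ^ (α * k + α - 1) / Gamma (α * k + α))) y :=
    fun k y hy => ((hasDerivAt_rpow_div_Gamma_add_one (hp k)
      (by linarith [hy.1] : 0 < y).ne').const_mul _)
  -- on `(t/2, 2t)`, `y ^ (p - 1) = y ^ p / y ≤ (2t) ^ p / (t/2)`
  have hbound : ∀ (k : ℕ), ∀ y ∈ Ioo (t / 2) (2 * t),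
      ‖c ^ k * (y ^ (α * k + α - 1) / Gamma (α * k + α))‖ ≤
        (|c| * (2 * t) ^ α) ^ k / Gamma (α * k + α) * ((2 * t) ^ α / (t / 2)) := by
    rintro k y ⟨hy1, hy2⟩
    have hy0 : 0 < y := by linarith
    have hΓ := Gamma_pos_of_pos (hp k)
    rw [norm_mul, norm_div, norm_pow, Real.norm_eq_abs, norm_of_nonneg hΓ.le,
      norm_of_nonneg (rpow_nonneg hy0.le _), rpow_sub_one hy0.ne']
    calc |c| ^ k * (y ^ (α * k + α) / y / Gamma (α * k + α))
        ≤ |c| ^ k * ((2 * t) ^ (α * k + α) / (t / 2) / Gamma (α * k + α)) := by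
          gcongr
      _ = _ := by rw [rpow_mul_natCast_add (by positivity), mul_pow]; ring
  have hsum : Summable fun k : ℕ => c ^ k * (t ^ (α * k + α) / Gamma (α * k + α + 1)) :=
    ((summable_pow_div_Gamma α (α + 1) (c * t ^ α) hα).mul_right (t ^ α)).congr fun k => by
      rw [rpow_mul_natCast_add ht, mul_pow, ← add_assoc]
      ring
  have hmem : t ∈ Ioo (t / 2) (2 * t) := ⟨by linarith, by linarith⟩
  refine (hasDerivAt_tsum_of_isPreconnected ((summable_pow_div_Gamma α α _ hα).mul_right _)
    isOpen_Ioo isPreconnected_Ioo hderiv hbound hmem hsum hmem).congr_deriv ?_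
  unfold mittagLeffler
  rw [← tsum_mul_left]
  refine tsum_congr fun k => ?_
  rw [add_sub_assoc, rpow_mul_natCast_add ht, mul_pow]
  ring

theorem riemannLiouville_deriv_Z_eq_Y_general
    (α lam : ℝ) (hα : 0 < α) (t : ℝ) (ht : 0 < t) :
    HasDerivAt
      (fun τ : ℝ => (1 / Real.Gamma α) *
        ∫ s in (0:ℝ)..τ, (τ - s) ^ (α - 1) * mittagLeffler α 1 (-(lam * s ^ α)))
      (t ^ (α - 1) * mittagLeffler α α (-(lam * t ^ α))) t := by
  have hG : ∀ τ > 0, (1 / Gamma α) *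
      ∫ s in (0:ℝ)..τ, (τ - s) ^ (α - 1) * mittagLeffler α 1 (-(lam * s ^ α)) =
        ∑' k : ℕ, (-lam) ^ k * (τ ^ (α * k + α) / Gamma (α * k + α + 1)) := fun τ hτ => by
    simp_rw [← neg_mul]
    rw [integral_sub_rpow_mul_mittagLeffler _ hα hτ, ← mul_assoc,
      one_div_mul_cancel (Gamma_pos_of_pos hα).ne', one_mul]
  rw [← neg_mul]
  exact (hasDerivAt_tsum_rpow_div_Gamma (-lam) hα ht).congr_of_eventuallyEq
    ((eventually_gt_nhds ht).mono hG)

/-- `Y = ∂_t^{1-α} Z` in Fourier space: the Riemann–Liouville derivative of order `1-α`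
of `t ↦ E_{α,1}(-λ t^α)` equals `t^{α-1} E_{α,α}(-λ t^α)`. -/
theorem riemannLiouville_deriv_Z_eq_Y
    (α lam : ℝ) (hα : 0 < α) (hα1 : α < 1) (hlam : 0 ≤ lam) (t : ℝ) (ht : 0 < t) :
    HasDerivAt
      (fun τ : ℝ => (1 / Real.Gamma α) *
        ∫ s in (0:ℝ)..τ, (τ - s) ^ (α - 1) * mittagLeffler α 1 (-(lam * s ^ α)))
      (t ^ (α - 1) * mittagLeffler α α (-(lam * t ^ α))) t :=
  riemannLiouville_deriv_Z_eq_Y_general α lam hα t ht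
end
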